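/- arXiv:1905.05099 — 4 statements merged into one kernel-verified Lean document; each statement's English description precedes it below -/
import Mathlib

section
/- The forgetful map φ_i : F_{n+1} → F_n between ordered configuration spaces of the complex plane, which forgets the i-th point of a configuration, is a fiber bundle whose fiber is the complement of n points in the complex plane. -/
noncomputable section

/-- The ordered configuration space of `n` points in the complex plane. -/
abbrev ConfigSpace (n : ℕ) : Type := { z : Fin n → ℂ // Function.Injective z }

/-- The Fadell–Neuwirth map `φ_i : F_{n+1} → F_n` forgetting the `i`-th point. -/
def forgetPoint (n : ℕ) (i : Fin (n + 1)) (z : ConfigSpace (n + 1)) : ConfigSpace n :=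
  ⟨z.1 ∘ i.succAbove, z.2.comp (Fin.succAbove_right_injective)⟩

/-!
Near a configuration `b` whose points are `4ε`-separated, every configuration `c` within `ε / 4`
of `b` is carried onto `b` by the homeomorphism `Φ_c w = w + ∑ⱼ ρ(|w - bⱼ| / ε) (bⱼ - cⱼ)` of `ℂ`,
where `ρ` is a ramp equal to `1` on `[0, 1]` and to `0` on `[2, ∞)`. The perturbation of the
identity is `1/2`-Lipschitz, so `Φ_c` is invertible by the contraction principle, and its
inverse depends continuously on `(c, w)`. Then `p ↦ (φᵢ p, Φ_{φᵢ p} pᵢ)` trivializes `φᵢ` over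
the neighbourhood of `b`, with fiber `ℂ ∖ {b₁, …, bₙ}`.
-/

open Function Set Filter Topology Metric
open scoped NNReal

lemma contractingWith_const_sub {E : Type*} [NormedAddCommGroup E] {K : ℝ≥0} {f : E → E}
    (hK : K < 1) (hf : LipschitzWith K f) (z : E) : ContractingWith K fun w => z - f w :=
  ⟨hK, LipschitzWith.of_dist_le_mul fun w w' => by rw [dist_sub_left]; exact hf.dist_le_mul w w'⟩

section IdAddContracting

variable {P E : Type*} [NormedAddCommGroup E] [CompleteSpace E]
  {K : ℝ≥0} {g : P → E → E}

def solveIdAdd (hK : K < 1) (hg : ∀ p, LipschitzWith K (g p)) (p : P) (z : E) : E :=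
  ContractingWith.fixedPoint _ (contractingWith_const_sub hK (hg p) z)

variable (hK : K < 1) (hg : ∀ p, LipschitzWith K (g p))

lemma solveIdAdd_add (p : P) (z : E) :
    solveIdAdd hK hg p z + g p (solveIdAdd hK hg p z) = z := by
  have h := (contractingWith_const_sub hK (hg p) z).fixedPoint_isFixedPt
  exact eq_sub_iff_add_eq.mp h.symm

lemma solveIdAdd_of_add (p : P) (w : E) : solveIdAdd hK hg p (w + g p w) = w :=
  ((contractingWith_const_sub hK (hg p) _).fixedPoint_unique (by simp [IsFixedPt])).symm

/-- The contraction estimate bounds `dist w w₀` by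
`(dist z z₀ + dist (g p w₀) (g p₀ w₀)) / (1 - K)`, so only continuity of `g · w₀` is needed. -/
lemma continuous_solveIdAdd [TopologicalSpace P] (hcont : ∀ w, Continuous fun p => g p w) :
    Continuous fun q : P × E => solveIdAdd hK hg q.1 q.2 := by
  refine continuous_iff_continuousAt.2 fun q₀ => ?_
  set w₀ := solveIdAdd hK hg q₀.1 q₀.2
  have hbound (q : P × E) :
      dist w₀ (solveIdAdd hK hg q.1 q.2) ≤ dist w₀ (q.2 - g q.1 w₀) / (1 - K) :=
    (contractingWith_const_sub hK (hg q.1) q.2).dist_fixedPoint_le w₀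
  have hlim : Tendsto (fun q : P × E => dist w₀ (q.2 - g q.1 w₀) / (1 - K)) (𝓝 q₀) (𝓝 0) := by
    have hc : Continuous fun q : P × E => dist w₀ (q.2 - g q.1 w₀) / (1 - K) := by
      have := hcont w₀
      fun_prop
    have h0 : dist w₀ (q₀.2 - g q₀.1 w₀) = 0 := by
      rw [← solveIdAdd_add hK hg q₀.1 q₀.2, add_sub_cancel_right, dist_self]
    simpa [h0] using hc.tendsto q₀
  rw [ContinuousAt, tendsto_iff_dist_tendsto_zero]
  exact squeeze_zero (fun _ => dist_nonneg) (fun q => (dist_comm _ _).trans_le (hbound q)) hlim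

def idAddContractingHomeomorph [TopologicalSpace P] (hcont : Continuous (uncurry g)) :
    P × E ≃ₜ P × E where
  toFun q := (q.1, q.2 + g q.1 q.2)
  invFun q := (q.1, solveIdAdd hK hg q.1 q.2)
  left_inv q := Prod.ext rfl (solveIdAdd_of_add hK hg q.1 q.2)
  right_inv q := Prod.ext rfl (solveIdAdd_add hK hg q.1 q.2)
  continuous_toFun := continuous_fst.prodMk (continuous_snd.add hcont)
  continuous_invFun := continuous_fst.prodMk (continuous_solveIdAdd hK hg hcont.uncurry_right)

end IdAddContracting

def ramp (r : ℝ) : ℝ := max 0 (min 1 (2 - r))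

lemma ramp_div_eq_one {ε r : ℝ} (hε : 0 < ε) (h : r ≤ ε) : ramp (r / ε) = 1 := by
  have : r / ε ≤ 1 := (div_le_one hε).2 h
  unfold ramp; rw [min_eq_left (by linarith), max_eq_right zero_le_one]

lemma ramp_div_eq_zero {ε r : ℝ} (hε : 0 < ε) (h : 2 * ε ≤ r) : ramp (r / ε) = 0 := by
  have : 2 ≤ r / ε := (le_div_iff₀ hε).2 h
  unfold ramp; rw [min_eq_right (by linarith), max_eq_left (by linarith)]

lemma lipschitzWith_ramp : LipschitzWith 1 ramp :=
  ((LipschitzWith.of_dist_le_mul fun r s => by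
    simp only [Real.dist_eq, NNReal.coe_one, one_mul, sub_sub_sub_cancel_left]
    exact (abs_sub_comm _ _).le).const_min 1).const_max 0

@[fun_prop]
lemma continuous_ramp : Continuous ramp := lipschitzWith_ramp.continuous

lemma abs_ramp_dist_div_sub_le {X : Type*} [PseudoMetricSpace X] {ε : ℝ} (hε : 0 < ε)
    (x w w' : X) : |ramp (dist w x / ε) - ramp (dist w' x / ε)| ≤ dist w w' / ε :=
  calc _ ≤ |dist w x / ε - dist w' x / ε| := by
        simpa [Real.dist_eq] using lipschitzWith_ramp.dist_le_mul (dist w x / ε) _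
    _ = |dist w x - dist w' x| / ε := by rw [← sub_div, abs_div, abs_of_pos hε]
    _ ≤ dist w w' / ε := by gcongr; exact abs_dist_sub_le _ _ _

lemma card_filter_dist_lt_le_one {ι X : Type*} [Fintype ι] [PseudoMetricSpace X] {b : ι → X}
    {ε : ℝ} (hsep : Pairwise fun j k => 4 * ε ≤ dist (b j) (b k)) (w : X) :
    (Finset.univ.filter fun j => dist w (b j) < 2 * ε).card ≤ 1 := by
  refine Finset.card_le_one.2 fun j hj k hk => ?_
  by_contra hjk
  simp only [Finset.mem_filter, Finset.mem_univ, true_and] at hj hk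
  linarith [hsep hjk, dist_triangle_left (b j) (b k) w]

section PushField

variable {ι E : Type*} [Fintype ι] [NormedAddCommGroup E] [NormedSpace ℝ E]

def pushField (b : ι → E) (ε : ℝ) (v : ι → E) (w : E) : E :=
  ∑ j, ramp (dist w (b j) / ε) • v j

variable {b : ι → E} {ε : ℝ}

lemma pushField_of_dist_le (hε : 0 < ε) (hsep : Pairwise fun j k => 4 * ε ≤ dist (b j) (b k))
    (v : ι → E) {w : E} {j : ι} (hw : dist w (b j) ≤ ε) : pushField b ε v w = v j := by
  rw [pushField, Finset.sum_eq_single j (fun k _ hkj => ?_) (by simp), ramp_div_eq_one hε hw,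
    one_smul]
  rw [ramp_div_eq_zero hε (by linarith [hsep hkj, dist_triangle_left (b k) (b j) w]), zero_smul]

lemma lipschitzWith_pushField (hε : 0 < ε) (hsep : Pairwise fun j k => 4 * ε ≤ dist (b j) (b k))
    {K : ℝ≥0} {v : ι → E} (hv : ∀ j, ‖v j‖ ≤ K * ε / 2) : LipschitzWith K (pushField b ε v) := by
  classical
  refine LipschitzWith.of_dist_le_mul fun w w' => ?_
  set Δ : ι → E := fun j => (ramp (dist w (b j) / ε) - ramp (dist w' (b j) / ε)) • v j
  set A : Finset ι := Finset.univ.filter (fun j => dist w (b j) < 2 * ε) ∪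
    Finset.univ.filter (fun j => dist w' (b j) < 2 * ε)
  have hΔ (j : ι) : ‖Δ j‖ ≤ K * dist w w' / 2 :=
    calc ‖Δ j‖ ≤ dist w w' / ε * (K * ε / 2) := by
          rw [norm_smul, Real.norm_eq_abs]
          exact mul_le_mul (abs_ramp_dist_div_sub_le hε (b j) w w') (hv j) (norm_nonneg _)
            (by positivity)
      _ = K * dist w w' / 2 := by field_simp
  -- `Δ j` vanishes unless `w` or `w'` lies within `2ε` of `b j`, which happens for at most two `j`.
  have hΔA : ∀ j ∉ A, Δ j = 0 := by
    intro j hj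
    simp only [A, Finset.mem_union, Finset.mem_filter, Finset.mem_univ, true_and, not_or,
      not_lt] at hj
    simp only [Δ, ramp_div_eq_zero hε hj.1, ramp_div_eq_zero hε hj.2, sub_self, zero_smul]
  have hA : A.card ≤ 2 := (Finset.card_union_le _ _).trans
    (add_le_add (card_filter_dist_lt_le_one hsep w) (card_filter_dist_lt_le_one hsep w'))
  calc dist (pushField b ε v w) (pushField b ε v w') = ‖∑ j ∈ A, Δ j‖ := by
        rw [dist_eq_norm, pushField, pushField, ← Finset.sum_sub_distrib,
          Finset.sum_subset (Finset.subset_univ A) fun j _ hj => hΔA j hj]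
        simp only [Δ, sub_smul]
    _ ≤ ∑ j ∈ A, ‖Δ j‖ := norm_sum_le _ _
    _ ≤ A.card • (K * dist w w' / 2) := Finset.sum_le_card_nsmul _ _ _ fun j _ => hΔ j
    _ ≤ 2 * (K * dist w w' / 2) := by rw [nsmul_eq_mul]; gcongr; exact_mod_cast hA
    _ = K * dist w w' := by ring

@[fun_prop]
lemma Continuous.pushField {X : Type*} [TopologicalSpace X] (b : ι → E) (ε : ℝ) {v : X → ι → E}
    {f : X → E} (hv : Continuous v) (hf : Continuous f) :
    Continuous fun x => pushField b ε (v x) (f x) := by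
  unfold _root_.pushField; fun_prop

end PushField

lemma Fin.insertNth_injective_iff {α : Type*} {n : ℕ} {i : Fin (n + 1)} {x : α}
    {c : Fin n → α} : Injective (i.insertNth x c) ↔ x ∉ range c ∧ Injective c := by
  simp [Injective, Fin.forall_iff_succAbove i, forall_and, eq_comm (a := x)]

lemma exists_pos_pairwise_le_dist {ι X : Type*} [Finite ι] [MetricSpace X] {b : ι → X}
    (hb : Injective b) : ∃ δ > 0, Pairwise fun j k => δ ≤ dist (b j) (b k) := by
  have h : ∀ᶠ δ in 𝓝[>] (0 : ℝ), ∀ p : ι × ι, p.1 ≠ p.2 → δ ≤ dist (b p.1) (b p.2) := by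
    refine Filter.eventually_all.2 fun p => ?_
    by_cases hp : p.1 = p.2
    · exact .of_forall fun _ h => absurd hp h
    · have : 0 < dist (b p.1) (b p.2) := dist_pos.2 (hb.ne hp)
      filter_upwards [nhdsWithin_le_nhds (eventually_le_nhds this)] with δ hδ _ using hδ
  obtain ⟨δ, hδ, hpos⟩ := (h.and self_mem_nhdsWithin).exists
  exact ⟨δ, hpos, fun j k hjk => hδ (j, k) hjk⟩

lemma continuous_forgetPoint (n : ℕ) (i : Fin (n + 1)) : Continuous (forgetPoint n i) :=
  .subtype_mk ((Pi.continuous_precomp i.succAbove).comp continuous_subtype_val) _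

def subtypeSndHomeomorph (X : Type*) {Y : Type*} [TopologicalSpace X] [TopologicalSpace Y]
    (s : Set Y) : {q : X × Y // q.2 ∈ s} ≃ₜ X × s where
  toFun q := (q.1.1, ⟨q.1.2, q.2⟩)
  invFun q := ⟨(q.1, q.2), q.2.2⟩
  left_inv _ := rfl
  right_inv _ := rfl
  continuous_toFun := by fun_prop
  continuous_invFun := by fun_prop

def forgetPointHomeomorph (n : ℕ) (i : Fin (n + 1)) (U : Set (ConfigSpace n)) :
    {p : ConfigSpace (n + 1) // forgetPoint n i p ∈ U} ≃ₜ {q : U × ℂ // q.2 ∉ range q.1.1.1} where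
  toFun p := ⟨(⟨forgetPoint n i p, p.2⟩, p.1.1 i), fun ⟨j, hj⟩ => Fin.succAbove_ne i j (p.1.2 hj)⟩
  invFun q := ⟨⟨i.insertNth q.1.2 q.1.1.1.1, Fin.insertNth_injective_iff.2 ⟨q.2, q.1.1.1.2⟩⟩,
    by simp [forgetPoint]⟩
  left_inv p := by ext1; ext1; exact Fin.insertNth_self_removeNth i p.1.1
  right_inv q := by ext <;> simp [forgetPoint]
  continuous_toFun := .subtype_mk (.prodMk (.subtype_mk
    ((continuous_forgetPoint n i).comp continuous_subtype_val) _)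
    ((continuous_apply i).comp (continuous_subtype_val.comp continuous_subtype_val))) _
  continuous_invFun := by
    refine .subtype_mk (.subtype_mk ?_ _) _
    fun_prop

section PushHomeomorph

variable {n : ℕ} (b : ConfigSpace n) {ε : ℝ} (hε : 0 < ε)
  (hsep : Pairwise fun j k => 4 * ε ≤ dist (b.1 j) (b.1 k))

lemma norm_sub_apply_le_of_mem_ball {c : ConfigSpace n} {r : ℝ} (hc : c ∈ ball b r)
    (j : Fin n) : ‖b.1 j - c.1 j‖ ≤ r := by
  rw [← dist_eq_norm, dist_comm]
  exact ((dist_le_pi_dist c.1 b.1 j).trans_lt (mem_ball.1 hc)).le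

def pushHomeomorph : ball b (ε / 4) × ℂ ≃ₜ ball b (ε / 4) × ℂ :=
  idAddContractingHomeomorph (K := 1 / 2) (g := fun c => pushField b.1 ε (b.1 - c.1.1))
    (by norm_num)
    (fun c => lipschitzWith_pushField hε hsep fun j => by
      have := norm_sub_apply_le_of_mem_ball b c.2 j
      norm_num [Pi.sub_apply]
      linarith)
    (by fun_prop)

lemma pushHomeomorph_apply (c : ball b (ε / 4)) (w : ℂ) :
    pushHomeomorph b hε hsep (c, w) = (c, w + pushField b.1 ε (b.1 - c.1.1) w) := rfl

lemma pushHomeomorph_apply_point (c : ball b (ε / 4)) (j : Fin n) :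
    pushHomeomorph b hε hsep (c, c.1.1 j) = (c, b.1 j) := by
  have hc : dist (c.1.1 j) (b.1 j) ≤ ε := by
    rw [dist_comm, dist_eq_norm]
    linarith [norm_sub_apply_le_of_mem_ball b c.2 j]
  rw [pushHomeomorph_apply, pushField_of_dist_le hε hsep _ hc, Pi.sub_apply, add_sub_cancel]

lemma pushHomeomorph_snd_mem_range_iff (q : ball b (ε / 4) × ℂ) :
    (pushHomeomorph b hε hsep q).2 ∈ range b.1 ↔ q.2 ∈ range q.1.1.1 := by
  obtain ⟨c, w⟩ := q
  refine ⟨fun ⟨j, hj⟩ => ⟨j, ?_⟩, fun ⟨j, hj⟩ => ⟨j, ?_⟩⟩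
  · have h : pushHomeomorph b hε hsep (c, c.1.1 j) = pushHomeomorph b hε hsep (c, w) :=
      (pushHomeomorph_apply_point b hε hsep c j).trans (Prod.ext rfl hj)
    exact congrArg Prod.snd ((pushHomeomorph b hε hsep).injective h)
  · rw [← show c.1.1 j = w from hj, pushHomeomorph_apply_point]

end PushHomeomorph

theorem forgetPoint_isFiberBundle_general (n : ℕ) (i : Fin (n + 1)) :
    Continuous (forgetPoint n i) ∧
    ∀ b : ConfigSpace n, ∃ U : Set (ConfigSpace n), IsOpen U ∧ b ∈ U ∧
      ∃ F : Set ℂ, F.Finite ∧ F.ncard = n ∧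
      ∃ e : {p : ConfigSpace (n + 1) // forgetPoint n i p ∈ U} ≃ₜ U × (Fᶜ : Set ℂ),
        ∀ p, ((e p).1 : ConfigSpace n) = forgetPoint n i p.1 := by
  refine ⟨continuous_forgetPoint n i, fun b => ?_⟩
  obtain ⟨ε, hε, hsep⟩ : ∃ ε > 0, Pairwise fun j k => 4 * ε ≤ dist (b.1 j) (b.1 k) := by
    obtain ⟨δ, hδ, hsep⟩ := exists_pos_pairwise_le_dist b.2
    exact ⟨δ / 4, by positivity,
      fun j k hjk => (mul_div_cancel₀ δ four_ne_zero).trans_le (hsep hjk)⟩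
  have hfiber (q : ball b (ε / 4) × ℂ) :
      q.2 ∉ range q.1.1.1 ↔ (pushHomeomorph b hε hsep q).2 ∈ (range b.1)ᶜ :=
    not_congr (pushHomeomorph_snd_mem_range_iff b hε hsep q).symm
  exact ⟨ball b (ε / 4), isOpen_ball, mem_ball_self (by positivity), range b.1, finite_range _,
    by rw [ncard_range_of_injective b.2, Nat.card_fin],
    (forgetPointHomeomorph n i _).trans
      (((pushHomeomorph b hε hsep).subtype hfiber).trans (subtypeSndHomeomorph _ _)),
    fun _ => rfl⟩

/-- The Fadell–Neuwirth map `φ_i : F_{n+1} → F_n` is a fiber bundle whose fiber is the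
complement of `n` points in the complex plane: it is continuous, and every point of the
base has an open neighbourhood `U` over which `φ_i` is trivialized, with fiber the
complement of a set of `n` points of `ℂ`. -/
theorem forgetPoint_isFiberBundle (n : ℕ) (hn : 1 ≤ n) (i : Fin (n + 1)) :
    Continuous (forgetPoint n i) ∧
    ∀ b : ConfigSpace n, ∃ U : Set (ConfigSpace n), IsOpen U ∧ b ∈ U ∧
      ∃ F : Set ℂ, F.Finite ∧ F.ncard = n ∧
      ∃ e : {p : ConfigSpace (n + 1) // forgetPoint n i p ∈ U} ≃ₜ U × (Fᶜ : Set ℂ),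
        ∀ p, ((e p).1 : ConfigSpace n) = forgetPoint n i p.1 :=
  forgetPoint_isFiberBundle_general n i
end
end

section
/- The space F_n^{log} = {((z_i)_{1≤i≤n}, (w_{ij})_{1≤i<j≤n}) | z_j − z_i = e^{w_{ij}} for all i < j}, topologized as a subspace of ℂ^n × ℂ^{n(n−1)/2}, admits a covering map p : F_n^{log} → F_n, given by forgetting the coordinates w_{ij}, whose fiber over any point is in bijection with ℤ^{n(n−1)/2}. -/
/-!
Shifting every logarithm by `2πi k_{ij}` is an action of `ℤ^{n(n-1)/2}` on `F_n^{log}` whose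
orbits are exactly the fibres of `p`, since `exp w = exp w'` iff `w - w' ∈ 2πiℤ`. Translates of a
ball of radius `π` under this action are pairwise disjoint, and `p` is open because `exp` is, so `p`
is the quotient map of a covering action; each fibre is then a torsor under `ℤ^{n(n-1)/2}`.
-/

noncomputable section

abbrev Pairs (n : ℕ) : Type := { p : Fin n × Fin n // p.1 < p.2 }

/-- The space `F_n^{log}`: configurations together with a choice of logarithm `w_{ij}` of
`z_j - z_i` for each `i < j`, topologized as a subspace of `ℂ^n × ℂ^{n(n-1)/2}`. -/
abbrev LogConfigSpace (n : ℕ) : Type :=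
  { zw : (Fin n → ℂ) × (Pairs n → ℂ) //
      ∀ p : Pairs n, zw.1 p.1.2 - zw.1 p.1.1 = Complex.exp (zw.2 p) }

/-- The covering map `p : F_n^{log} → F_n` forgetting the logarithms. -/
def logProj (n : ℕ) : C(LogConfigSpace n, ConfigSpace n) where
  toFun x := ⟨x.1.1, by
    intro i j h
    by_contra hne
    rcases lt_or_gt_of_ne hne with hlt | hlt
    · have h2 := x.2 ⟨(i, j), hlt⟩
      rw [h, sub_self] at h2
      exact Complex.exp_ne_zero _ h2.symm
    · have h2 := x.2 ⟨(j, i), hlt⟩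
      rw [h, sub_self] at h2
      exact Complex.exp_ne_zero _ h2.symm⟩
  continuous_toFun := by
    apply Continuous.subtype_mk
    exact continuous_fst.comp continuous_subtype_val

open Complex Topology Metric
open scoped Real

namespace LogConfigSpace

variable {n : ℕ}

instance : VAdd (Pairs n → ℤ) (LogConfigSpace n) where
  vadd k x := ⟨(x.1.1, x.1.2 + fun p => k p * (2 * π * I)), fun p => by
    simp [exp_add, x.2 p]⟩

@[simp]
lemma coe_vadd (k : Pairs n → ℤ) (x : LogConfigSpace n) :
    ((k +ᵥ x : LogConfigSpace n) : (Fin n → ℂ) × (Pairs n → ℂ)) =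
      (x.1.1, x.1.2 + fun p => k p * (2 * π * I)) := rfl

instance : AddAction (Pairs n → ℤ) (LogConfigSpace n) where
  zero_vadd x := by ext <;> simp
  add_vadd k l x := by ext <;> simp [add_mul, add_assoc, add_comm]

instance : ContinuousConstVAdd (Pairs n → ℤ) (LogConfigSpace n) where
  continuous_const_vadd k := by
    refine Continuous.subtype_mk ?_ _
    fun_prop

lemma two_pi_mul_abs_le_dist_vadd (k : Pairs n → ℤ) (x : LogConfigSpace n) (p : Pairs n) :
    2 * π * |(k p : ℝ)| ≤ dist (k +ᵥ x) x :=
  calc 2 * π * |(k p : ℝ)| = dist ((k +ᵥ x).1.2 p) (x.1.2 p) := by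
        simp [abs_of_pos Real.pi_pos, mul_comm]
    _ ≤ dist (k +ᵥ x).1.2 x.1.2 := dist_le_pi_dist _ _ p
    _ ≤ dist (k +ᵥ x) x := le_max_right _ _

lemma eq_zero_of_vadd_mem_ball {k : Pairs n → ℤ} {x y : LogConfigSpace n}
    (hy : y ∈ ball x π) (hky : k +ᵥ y ∈ ball x π) : k = 0 := by
  funext p
  have hlt : 2 * π * |(k p : ℝ)| < 2 * π :=
    calc 2 * π * |(k p : ℝ)| ≤ dist (k +ᵥ y) y := two_pi_mul_abs_le_dist_vadd k y p
      _ ≤ dist (k +ᵥ y) x + dist y x := dist_triangle_right _ _ _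
      _ < 2 * π := by rw [mem_ball] at hy hky; linarith
  have habs : |k p| < 1 := by
    exact_mod_cast (mul_lt_iff_lt_one_right (by positivity)).mp hlt
  exact Int.abs_lt_one_iff.mp habs

end LogConfigSpace

section

variable {n : ℕ}

lemma logProj_eq_logProj_iff {x y : LogConfigSpace n} :
    logProj n x = logProj n y ↔ x.1.1 = y.1.1 :=
  Subtype.ext_iff

lemma logProj_surjective : Function.Surjective (logProj n) := fun b =>
  ⟨⟨(b.1, fun p => log (b.1 p.1.2 - b.1 p.1.1)), fun p =>
    (exp_log (sub_ne_zero.mpr (b.2.ne p.2.ne'))).symm⟩, rfl⟩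

lemma logProj_eq_logProj_iff_mem_orbit {x y : LogConfigSpace n} :
    logProj n x = logProj n y ↔ x ∈ AddAction.orbit (Pairs n → ℤ) y := by
  refine ⟨fun h => ?_, ?_⟩
  · rw [logProj_eq_logProj_iff] at h
    have hexp (p : Pairs n) : exp (x.1.2 p) = exp (y.1.2 p) := by rw [← x.2 p, ← y.2 p, h]
    choose k hk using fun p => exp_eq_exp_iff_exists_int.mp (hexp p)
    exact ⟨k, Subtype.ext (Prod.ext h.symm (funext fun p => (hk p).symm))⟩
  · rintro ⟨k, rfl⟩
    exact logProj_eq_logProj_iff.mpr rfl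

lemma isOpenMap_logProj : IsOpenMap (logProj n) := by
  refine IsOpenMap.of_nhds_le fun x V hV => ?_
  obtain ⟨ε, hε, hball⟩ := Metric.mem_nhds_iff.mp (show logProj n ⁻¹' V ∈ 𝓝 x from hV)
  -- `exp` is open, so near `p x` every difference `z_j - z_i` has a logarithm `ε`-close to `w_{ij}`
  have hnear (p : Pairs n) : ∀ᶠ b in 𝓝 (logProj n x),
      b.1 p.1.2 - b.1 p.1.1 ∈ exp '' ball (x.1.2 p) ε := by
    have hcont : ContinuousAt (fun b : ConfigSpace n => b.1 p.1.2 - b.1 p.1.1) (logProj n x) :=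
      (((continuous_apply p.1.2).comp continuous_subtype_val).sub
        ((continuous_apply p.1.1).comp continuous_subtype_val)).continuousAt
    refine hcont.preimage_mem_nhds ?_
    convert isOpenMap_exp.image_mem_nhds (ball_mem_nhds (x.1.2 p) hε) using 2
    exact x.2 p
  filter_upwards [ball_mem_nhds _ hε, Filter.eventually_all.mpr hnear] with b hb hlog
  choose w hw hexpw using hlog
  have hwx : dist w x.1.2 < ε := (dist_pi_lt_iff hε).mpr hw
  exact hball (a := ⟨(b.1, w), fun p => (hexpw p).symm⟩) (max_lt hb hwx)

theorem isAddQuotientCoveringMap_logProj (n : ℕ) :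
    IsAddQuotientCoveringMap (logProj n) (Pairs n → ℤ) where
  toIsQuotientMap := isOpenMap_logProj.isQuotientMap (logProj n).continuous logProj_surjective
  apply_eq_iff_mem_orbit := logProj_eq_logProj_iff_mem_orbit
  disjoint x := ⟨ball x π, ball_mem_nhds x Real.pi_pos, fun _ ⟨_, ⟨_, hy, rfl⟩, hky⟩ =>
    LogConfigSpace.eq_zero_of_vadd_mem_ball hy hky⟩

end

/-- `p : F_n^{log} → F_n` is a covering map, and its fiber over any point is in bijection
with `ℤ^{n(n-1)/2}`. -/
theorem logProj_isCoveringMap (n : ℕ) :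
    IsCoveringMap (logProj n) ∧
    ∀ b : ConfigSpace n, Nonempty ((logProj n ⁻¹' {b} : Set (LogConfigSpace n)) ≃ (Pairs n → ℤ)) := by
  have h := isAddQuotientCoveringMap_logProj n
  refine ⟨h.isCoveringMap, fun b => ?_⟩
  obtain ⟨x, rfl⟩ := logProj_surjective b
  exact ⟨h.fiberEquivAddGroup ⟨x, rfl⟩⟩

end
end

section
/- The subspace F̃_n^{log} of F_n^{log} consisting of configurations ((z_i),(w_{ij})) with z_1 = 0, z_2 = 1 and w_{12} = 0 is a deformation retract of F_n^{log}, via the homotopy H(((z_i),(w_{ij})); t) = ((e^{−t w_{12}} (z_i − t z_1)), (w_{ij} − t w_{12})). -/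
noncomputable section

/-- The pair `(1,2)` (as indices of strands), available once `2 ≤ n`. -/
def pair12 (n : ℕ) (hn : 2 ≤ n) : Pairs n :=
  ⟨(⟨0, by omega⟩, ⟨1, by omega⟩), by simp [Fin.mk_lt_mk]⟩

/-- The subspace `F̃_n^{log} ⊂ F_n^{log}` where `z_1 = 0`, `z_2 = 1` and `w_{12} = 0`. -/
def tildeLogConfig (n : ℕ) (hn : 2 ≤ n) : Set (LogConfigSpace n) :=
  {x | x.1.1 ⟨0, by omega⟩ = 0 ∧ x.1.1 ⟨1, by omega⟩ = 1 ∧ x.1.2 (pair12 n hn) = 0}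

/-- The homotopy `H(((z_i),(w_{ij})); t) = ((e^{-t w_{12}} (z_i - t z_1)), (w_{ij} - t w_{12}))`. -/
def retractMap (n : ℕ) (hn : 2 ≤ n) (t : ℝ) (x : LogConfigSpace n) : LogConfigSpace n :=
  ⟨(fun i => Complex.exp (-((t : ℂ) * x.1.2 (pair12 n hn))) *
        (x.1.1 i - (t : ℂ) * x.1.1 ⟨0, by omega⟩),
    fun p => x.1.2 p - (t : ℂ) * x.1.2 (pair12 n hn)), by
    intro p
    have h := x.2 p
    dsimp only
    calc Complex.exp (-((t : ℂ) * x.1.2 (pair12 n hn))) *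
            (x.1.1 p.1.2 - (t : ℂ) * x.1.1 ⟨0, by omega⟩) -
          Complex.exp (-((t : ℂ) * x.1.2 (pair12 n hn))) *
            (x.1.1 p.1.1 - (t : ℂ) * x.1.1 ⟨0, by omega⟩)
        = Complex.exp (-((t : ℂ) * x.1.2 (pair12 n hn))) * (x.1.1 p.1.2 - x.1.1 p.1.1) := by
          ring
      _ = Complex.exp (-((t : ℂ) * x.1.2 (pair12 n hn))) * Complex.exp (x.1.2 p) := by rw [h]
      _ = Complex.exp (x.1.2 p - (t : ℂ) * x.1.2 (pair12 n hn)) := by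
          rw [← Complex.exp_add]; congr 1; ring⟩

/-- `F̃_n^{log}` is a deformation retract of `F_n^{log}` via the homotopy
`H(((z_i),(w_{ij})); t) = ((e^{-t w_{12}} (z_i - t z_1)), (w_{ij} - t w_{12}))`:
`H` is continuous, starts at the identity, fixes `F̃_n^{log}` pointwise, and ends with a
retraction onto `F̃_n^{log}`. -/
theorem tildeLogConfig_deformationRetract (n : ℕ) (hn : 2 ≤ n) :
    Continuous (fun q : LogConfigSpace n × ℝ => retractMap n hn q.2 q.1) ∧
    (∀ x, retractMap n hn 0 x = x) ∧
    (∀ x ∈ tildeLogConfig n hn, ∀ t : ℝ, retractMap n hn t x = x) ∧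
    (∀ x, retractMap n hn 1 x ∈ tildeLogConfig n hn) := by
  refine ⟨?_, ?_, ?_, ?_⟩
  · apply Continuous.subtype_mk
    have hz : Continuous fun q : LogConfigSpace n × ℝ => (q.1 : (Fin n → ℂ) × (Pairs n → ℂ)).1 :=
      (continuous_fst.subtype_val).fst
    have hw : Continuous fun q : LogConfigSpace n × ℝ => (q.1 : (Fin n → ℂ) × (Pairs n → ℂ)).2 :=
      (continuous_fst.subtype_val).snd
    have ht : Continuous fun q : LogConfigSpace n × ℝ => ((q.2 : ℝ) : ℂ) :=
      Complex.continuous_ofReal.comp continuous_snd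
    have hw12 : Continuous fun q : LogConfigSpace n × ℝ =>
        (q.1 : (Fin n → ℂ) × (Pairs n → ℂ)).2 (pair12 n hn) :=
      (continuous_apply _).comp hw
    refine Continuous.prodMk ?_ ?_
    · exact continuous_pi fun i =>
        ((Complex.continuous_exp.comp (ht.mul hw12).neg).mul
          (((continuous_apply i).comp hz).sub (ht.mul ((continuous_apply _).comp hz))))
    · exact continuous_pi fun p =>
        (((continuous_apply p).comp hw).sub (ht.mul hw12))
  · intro x
    apply Subtype.ext
    ext i <;> simp [retractMap]
  · intro x ⟨h1, h2, h3⟩ t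
    apply Subtype.ext
    ext i
    · simp [retractMap, h1, h3]
    · simp [retractMap, h3]
  · intro x
    have h := x.2 (pair12 n hn)
    refine ⟨by simp [retractMap], ?_, by simp [retractMap]⟩
    show Complex.exp _ * (x.1.1 ⟨1, _⟩ - _ * x.1.1 ⟨0, _⟩) = 1
    have : x.1.1 ⟨1, by omega⟩ - (1:ℂ) * x.1.1 ⟨0, by omega⟩ =
        Complex.exp (x.1.2 (pair12 n hn)) := by rw [one_mul, ← h]; rfl
    rw [Complex.ofReal_one, this, ← Complex.exp_add]
    simp

end
end

section
/- The fundamental group of F_{n−2}(ℂ∖{0,1}) is isomorphic to the kernel of ψ_{12} : P_n → ℤ, and its commutator subgroup is isomorphic to the commutator subgroup [P_n, P_n] of the pure braid group. -/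
noncomputable section

def basePt (n : ℕ) : ConfigSpace n :=
  ⟨fun i => ((i : ℕ) : ℂ), fun _ _ h => Fin.val_injective (Nat.cast_injective h)⟩

abbrev PureBraidGroup (n : ℕ) : Type := FundamentalGroup (ConfigSpace n) (basePt n)

open CategoryTheory FundamentalGroupoid in
noncomputable def inducedHom {X Y : Type} [TopologicalSpace X] [TopologicalSpace Y]
    (f : C(X, Y)) {x : X} {y : Y} (h : f x = y) :
    FundamentalGroup X x →* FundamentalGroup Y y := by
  subst h
  exact CategoryTheory.Functor.mapEnd
    (X := (⟨x⟩ : FundamentalGroupoid (TopCat.of X)))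
    (FundamentalGroupoid.fundamentalGroupoidFunctor.map
      (show TopCat.of X ⟶ TopCat.of Y from TopCat.ofHom f))

/-- `F_{n-2}(ℂ∖{0,1})`, realized as the fiber over `(0,1)` of the fibration
`ψ_12 : F_n → F_2`: configurations of `n` ordered points with `z_1 = 0` and `z_2 = 1`. -/
abbrev FiberConfig (n : ℕ) (hn : 2 ≤ n) : Type :=
  { z : Fin n → ℂ // Function.Injective z ∧ z ⟨0, by omega⟩ = 0 ∧ z ⟨1, by omega⟩ = 1 }

def fiberBasePt (n : ℕ) (hn : 2 ≤ n) : FiberConfig n hn :=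
  ⟨fun i => ((i : ℕ) : ℂ), ⟨fun _ _ h => Fin.val_injective (Nat.cast_injective h), by simp, by simp⟩⟩

/-- The restriction of `ψ_{ij} : F_n → F_2` to the fiber `F_{n-2}(ℂ∖{0,1})`. -/
def psiMapFiber (n : ℕ) (hn : 2 ≤ n) (p : Pairs n) : C(FiberConfig n hn, ConfigSpace 2) where
  toFun z := ⟨fun j => z.1 (if j = 0 then p.1.1 else p.1.2), by
    intro a b h
    fin_cases a <;> fin_cases b <;> simp only [] at h ⊢ <;>
      first
        | rfl
        | (exact absurd (z.2.1 (by simpa using h)) (ne_of_lt p.2))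
        | (exact absurd (z.2.1 (by simpa using h)) (ne_of_gt p.2))⟩
  continuous_toFun := by
    apply Continuous.subtype_mk
    exact continuous_pi fun j =>
      (continuous_apply (if j = 0 then p.1.1 else p.1.2)).comp continuous_subtype_val

/-- The forgetful map `ψ_{12} : F_n → F_2`. -/
def psiMap12 (n : ℕ) (hn : 2 ≤ n) : C(ConfigSpace n, ConfigSpace 2) where
  toFun z := ⟨fun j => z.1 (if j = 0 then (pair12 n hn).1.1 else (pair12 n hn).1.2), by
    intro a b h
    fin_cases a <;> fin_cases b <;> simp only [] at h ⊢ <;>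
      first
        | rfl
        | (exact absurd (z.2 (by simpa using h)) (ne_of_lt (pair12 n hn).2))
        | (exact absurd (z.2 (by simpa using h)) (ne_of_gt (pair12 n hn).2))⟩
  continuous_toFun := by
    apply Continuous.subtype_mk
    exact continuous_pi fun j =>
      (continuous_apply (if j = 0 then (pair12 n hn).1.1 else (pair12 n hn).1.2)).comp
        continuous_subtype_val

/-- The inclusion of the fiber `F_{n-2}(ℂ∖{0,1})` into `F_n`. -/
def fiberIncl (n : ℕ) (hn : 2 ≤ n) : C(FiberConfig n hn, ConfigSpace n) where
  toFun z := ⟨z.1, z.2.1⟩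
  continuous_toFun := Continuous.subtype_mk continuous_subtype_val _

/-! The map `z ↦ (ψ₁₂ z, (z - z₁) / (z₂ - z₁))` embeds `F_n` into `F_2 × F_{n-2}(ℂ∖{0,1})` with
continuous left inverse `((a₁, a₂), w) ↦ a₁ + (a₂ - a₁) w`, and it sends the fiber inclusion to
`w ↦ ((0, 1), w)`. So a loop in `F_n` is determined by its images under `ψ₁₂` and under the
normalization, the fiber inclusion splits the normalization, and `ψ₁₂` kills the fiber: this gives
injectivity and `range = ker ψ₁₂`. Since `F_2 ≅ ℂ × ℂˣ` is a topological group, `π₁(F_2)` is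
abelian, so `ψ₁₂` kills every commutator, and every commutator of `P_n` comes from the fiber. -/

open scoped commutatorElement

section SplitByProjections

variable {G A K : Type*} [Group G] [Group A] [Group K] {p : G →* A} {q : G →* K} {s : K →* G}

theorem commute_of_injective_prod (hpq : Function.Injective (p.prod q)) {u v : G}
    (hu : q u = 1) (hv : p v = 1) : Commute u v :=
  hpq (Prod.ext (by simp [hv]) (by simp [hu]))

theorem range_eq_ker_of_injective_prod (hpq : Function.Injective (p.prod q))
    (hps : p.comp s = 1) (hqs : Function.LeftInverse q s) : s.range = p.ker := by
  ext g
  refine ⟨?_, fun hg => ⟨q g, hpq (Prod.ext ?_ (hqs (q g)))⟩⟩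
  · rintro ⟨k, rfl⟩
    exact DFunLike.congr_fun hps k
  · exact (DFunLike.congr_fun hps (q g)).trans hg.symm

theorem map_commutator_eq_of_injective_prod (hA : ∀ a b : A, a * b = b * a)
    (hpq : Function.Injective (p.prod q)) (hps : p.comp s = 1) (hqs : Function.LeftInverse q s) :
    (commutator K).map s = commutator G := by
  refine le_antisymm ?_ ?_
  · rw [commutator_def, commutator_def, Subgroup.map_commutator]
    exact Subgroup.commutator_mono le_top le_top
  · rw [commutator_def, Subgroup.commutator_le]
    intro g _ h _
    have hgh : ⁅g, h⁆ = s ⁅q g, q h⁆ := by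
      refine hpq (Prod.ext ?_ ?_)
      · change p ⁅g, h⁆ = p (s _)
        rw [map_commutatorElement, commutatorElement_eq_one_iff_mul_comm.2 (hA _ _)]
        exact (DFunLike.congr_fun hps _).symm
      · change q ⁅g, h⁆ = q (s _)
        rw [map_commutatorElement, hqs]
    rw [hgh]
    exact Subgroup.mem_map_of_mem _ (Subgroup.commutator_mem_commutator trivial trivial)

end SplitByProjections

section InducedHom

variable {X Y Z A B : Type} [TopologicalSpace X] [TopologicalSpace Y] [TopologicalSpace Z]
  [TopologicalSpace A] [TopologicalSpace B]

theorem inducedHom_comp (f : C(X, Y)) (g : C(Y, Z)) {x : X} {y : Y} {z : Z} (hf : f x = y)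
    (hg : g y = z) :
    (inducedHom g hg).comp (inducedHom f hf) = inducedHom (g.comp f) (by simp [hf, hg]) := by
  subst hf hg
  ext ⟨γ⟩
  rfl

theorem inducedHom_id (x : X) :
    inducedHom (ContinuousMap.id X) (x := x) rfl = MonoidHom.id _ := by
  ext ⟨γ⟩
  rfl

theorem inducedHom_const (x : X) (y : Y) :
    inducedHom (ContinuousMap.const X y) (x := x) rfl = 1 := by
  ext ⟨γ⟩
  rfl

theorem inducedHom_congr {f g : C(X, Y)} (hfg : f = g) {x : X} {y : Y} (hf : f x = y)
    (hg : g x = y) : inducedHom f hf = inducedHom g hg := by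
  subst hfg
  rfl

theorem inducedHom_leftInverse {f : C(X, Y)} {g : C(Y, X)}
    (hgf : g.comp f = ContinuousMap.id X) {x : X} {y : Y} (hf : f x = y) (hg : g y = x) :
    Function.LeftInverse (inducedHom g hg) (inducedHom f hf) := by
  have hid := (inducedHom_comp f g hf hg).trans
    ((inducedHom_congr hgf _ rfl).trans (inducedHom_id x))
  exact DFunLike.congr_fun hid

theorem inducedHom_injective_of_comp_eq_id {f : C(X, Y)} {g : C(Y, X)}
    (hgf : g.comp f = ContinuousMap.id X) {x : X} {y : Y} (hf : f x = y) :
    Function.Injective (inducedHom f hf) :=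
  (inducedHom_leftInverse hgf hf (hf ▸ ContinuousMap.congr_fun hgf x)).injective

theorem inducedHom_comp_of_comp_eq_const {f : C(X, Y)} {g : C(Y, Z)} {z : Z}
    (hgf : g.comp f = ContinuousMap.const X z) {x : X} {y : Y} (hf : f x = y) (hg : g y = z) :
    (inducedHom g hg).comp (inducedHom f hf) = 1 := by
  rw [inducedHom_comp]
  exact (inducedHom_congr hgf _ rfl).trans (inducedHom_const x z)

theorem inducedHom_fst_prod_snd_injective (a : A) (b : B) :
    Function.Injective ((inducedHom ContinuousMap.fst (x := (a, b)) (y := a) rfl).prod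
      (inducedHom ContinuousMap.snd (y := b) rfl)) := by
  intro γ δ h
  rw [← Path.Homotopic.prod_projLeft_projRight γ, ← Path.Homotopic.prod_projLeft_projRight δ]
  exact congrArg₂ Path.Homotopic.prod (congrArg Prod.fst h) (congrArg Prod.snd h)

theorem inducedHom_prod_injective_of_comp_eq_id {f : C(X, A)} {g : C(X, B)} {r : C(A × B, X)}
    (hr : r.comp (f.prodMk g) = ContinuousMap.id X) {x : X} {a : A} {b : B} (hf : f x = a)
    (hg : g x = b) : Function.Injective ((inducedHom f hf).prod (inducedHom g hg)) := by
  have hfg : f.prodMk g x = (a, b) := Prod.ext hf hg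
  have hfst : inducedHom f hf =
      (inducedHom ContinuousMap.fst (y := a) rfl).comp (inducedHom _ hfg) :=
    (inducedHom_comp _ ContinuousMap.fst hfg rfl).symm
  have hsnd : inducedHom g hg =
      (inducedHom ContinuousMap.snd (y := b) rfl).comp (inducedHom _ hfg) :=
    (inducedHom_comp _ ContinuousMap.snd hfg rfl).symm
  intro γ δ h
  simp only [MonoidHom.prod_apply, Prod.mk.injEq, hfst, hsnd, MonoidHom.comp_apply] at h
  exact inducedHom_injective_of_comp_eq_id hr hfg
    (inducedHom_fst_prod_snd_injective a b (Prod.ext h.1 h.2))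

end InducedHom

theorem fundamentalGroup_mul_comm_of_isTopologicalGroup {M : Type} [TopologicalSpace M] [Group M]
    [IsTopologicalGroup M] {m : M} (α β : FundamentalGroup M m) : α * β = β * α := by
  -- Eckmann–Hilton: `μ` is a left inverse of both axis inclusions, whose loops commute.
  let μ : C(M × M, M) := ⟨fun p => p.1 * m⁻¹ * p.2, by fun_prop⟩
  let ι₁ : C(M, M × M) := (ContinuousMap.id M).prodMk (.const M m)
  let ι₂ : C(M, M × M) := (ContinuousMap.const M m).prodMk (.id M)
  have hμ : μ (m, m) = m := by simp [μ]
  have hμι₁ : Function.LeftInverse (inducedHom μ hμ) (inducedHom ι₁ (y := (m, m)) rfl) :=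
    inducedHom_leftInverse (f := ι₁) (g := μ) (by ext; simp [μ, ι₁]) rfl hμ
  have hμι₂ : Function.LeftInverse (inducedHom μ hμ) (inducedHom ι₂ (y := (m, m)) rfl) :=
    inducedHom_leftInverse (f := ι₂) (g := μ) (by ext; simp [μ, ι₂]) rfl hμ
  have hcomm : Commute (inducedHom ι₁ (y := (m, m)) rfl α) (inducedHom ι₂ (y := (m, m)) rfl β) :=
    commute_of_injective_prod (inducedHom_fst_prod_snd_injective m m)
      (DFunLike.congr_fun (inducedHom_comp_of_comp_eq_const (g := .snd) (f := ι₁) rfl rfl rfl) α)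
      (DFunLike.congr_fun (inducedHom_comp_of_comp_eq_const (g := .fst) (f := ι₂) rfl rfl rfl) β)
  calc α * β = inducedHom μ hμ
        (inducedHom ι₁ (y := (m, m)) rfl α * inducedHom ι₂ (y := (m, m)) rfl β) := by
        rw [map_mul, hμι₁, hμι₂]
    _ = β * α := by rw [hcomm.eq, map_mul, hμι₁, hμι₂]

theorem continuous_configSpace_apply {n : ℕ} (i : Fin n) :
    Continuous fun z : ConfigSpace n => z.1 i :=
  (continuous_apply i).comp continuous_subtype_val

def configTwoToGroup : C(ConfigSpace 2, Multiplicative ℂ × ℂˣ) where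
  toFun z := (.ofAdd (z.1 0), Units.mk0 (z.1 1 - z.1 0) (sub_ne_zero.2 (z.2.ne (by decide))))
  continuous_toFun := by
    have h := continuous_configSpace_apply (n := 2)
    refine (continuous_ofAdd.comp (h 0)).prodMk (Units.continuous_iff.2 ⟨?_, ?_⟩)
    · simp only [Function.comp_def, Units.val_mk0]
      exact (h 1).sub (h 0)
    · simp only [Units.val_inv_eq_inv_val, Units.val_mk0]
      exact ((h 1).sub (h 0)).inv₀ fun z => sub_ne_zero.2 (z.2.ne (by decide))

def groupToConfigTwo : C(Multiplicative ℂ × ℂˣ, ConfigSpace 2) where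
  toFun p := ⟨![p.1.toAdd, p.1.toAdd + p.2], by
    intro i j h
    fin_cases i <;> fin_cases j <;> simp_all⟩
  continuous_toFun := by
    refine Continuous.subtype_mk (continuous_pi fun i => ?_) _
    fin_cases i
    · exact continuous_toAdd.comp continuous_fst
    · exact (continuous_toAdd.comp continuous_fst).add (Units.continuous_val.comp continuous_snd)

theorem groupToConfigTwo_comp_configTwoToGroup :
    groupToConfigTwo.comp configTwoToGroup = ContinuousMap.id _ := by
  ext z i
  fin_cases i <;> simp [groupToConfigTwo, configTwoToGroup]

theorem fundamentalGroup_configSpace_two_mul_comm {z : ConfigSpace 2}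
    (α β : FundamentalGroup (ConfigSpace 2) z) : α * β = β * α :=
  inducedHom_injective_of_comp_eq_id groupToConfigTwo_comp_configTwoToGroup rfl
    (by simp only [map_mul, fundamentalGroup_mul_comm_of_isTopologicalGroup])

section Normalization

variable (n : ℕ) (hn : 2 ≤ n)

theorem configSpace_sub_ne_zero (z : ConfigSpace n) :
    z.1 ⟨1, by omega⟩ - z.1 ⟨0, by omega⟩ ≠ 0 :=
  sub_ne_zero.2 (z.2.ne (by simp))

def normalizeConfig : C(ConfigSpace n, FiberConfig n hn) where
  toFun z := ⟨fun i => (z.1 i - z.1 ⟨0, by omega⟩) / (z.1 ⟨1, by omega⟩ - z.1 ⟨0, by omega⟩),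
    fun i j h => z.2 (by simpa [div_left_inj' (configSpace_sub_ne_zero n hn z)] using h),
    by simp, div_self (configSpace_sub_ne_zero n hn z)⟩
  continuous_toFun := by
    have h := continuous_configSpace_apply (n := n)
    exact Continuous.subtype_mk (continuous_pi fun i =>
      ((h i).sub (h _)).div ((h _).sub (h _)) (configSpace_sub_ne_zero n hn)) _

def affineConfig : C(ConfigSpace 2 × FiberConfig n hn, ConfigSpace n) where
  toFun p := ⟨fun i => p.1.1 0 + (p.1.1 1 - p.1.1 0) * p.2.1 i, fun i j h =>
    p.2.2.1 (mul_left_cancel₀ (sub_ne_zero.2 (p.1.2.ne (by decide))) (add_left_cancel h))⟩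
  continuous_toFun := by
    have h₁ := continuous_configSpace_apply (n := 2)
    refine Continuous.subtype_mk (continuous_pi fun i => ?_) _
    exact ((h₁ 0).comp continuous_fst).add
      ((((h₁ 1).comp continuous_fst).sub ((h₁ 0).comp continuous_fst)).mul
        (((continuous_apply i).comp continuous_subtype_val).comp continuous_snd))

theorem affineConfig_comp_prodMk :
    (affineConfig n hn).comp ((psiMap12 n hn).prodMk (normalizeConfig n hn)) =
      ContinuousMap.id _ := by
  ext z i
  change z.1 ⟨0, by omega⟩ + (z.1 ⟨1, by omega⟩ - z.1 ⟨0, by omega⟩) *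
    ((z.1 i - z.1 ⟨0, by omega⟩) / (z.1 ⟨1, by omega⟩ - z.1 ⟨0, by omega⟩)) = z.1 i
  rw [mul_div_cancel₀ _ (configSpace_sub_ne_zero n hn z), add_sub_cancel]

theorem psiMap12_comp_fiberIncl :
    (psiMap12 n hn).comp (fiberIncl n hn) = ContinuousMap.const _ (psiMap12 n hn (basePt n)) := by
  ext w j
  fin_cases j <;> simp [psiMap12, fiberIncl, basePt, pair12, w.2.2.1, w.2.2.2]

theorem normalizeConfig_comp_fiberIncl :
    (normalizeConfig n hn).comp (fiberIncl n hn) = ContinuousMap.id _ := by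
  ext w i
  simp [normalizeConfig, fiberIncl, w.2.2.1, w.2.2.2]

end Normalization

/-- The fundamental group of `F_{n-2}(ℂ∖{0,1})` is isomorphic (via the inclusion of the
fiber) to the kernel of `ψ_{12} : P_n → P_2 ≅ ℤ`, and its commutator subgroup is carried
isomorphically onto the commutator subgroup `[P_n, P_n]` of the pure braid group. -/
theorem fiberConfig_pi1_eq_ker_psi12 (n : ℕ) (hn : 2 ≤ n) :
    Function.Injective (inducedHom (fiberIncl n hn) (x := fiberBasePt n hn) rfl) ∧
    MonoidHom.range (inducedHom (fiberIncl n hn) (x := fiberBasePt n hn) rfl)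
      = MonoidHom.ker (inducedHom (psiMap12 n hn) (x := basePt n) rfl) ∧
    Subgroup.map (inducedHom (fiberIncl n hn) (x := fiberBasePt n hn) rfl)
        (commutator (FundamentalGroup (FiberConfig n hn) (fiberBasePt n hn)))
      = commutator (PureBraidGroup n) := by
  have hbase : normalizeConfig n hn (basePt n) = fiberBasePt n hn :=
    ContinuousMap.congr_fun (normalizeConfig_comp_fiberIncl n hn) (fiberBasePt n hn)
  have hpq := inducedHom_prod_injective_of_comp_eq_id (affineConfig_comp_prodMk n hn) rfl hbase
  have hps : (inducedHom (psiMap12 n hn) (x := basePt n) rfl).comp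
      (inducedHom (fiberIncl n hn) (x := fiberBasePt n hn) rfl) = 1 :=
    inducedHom_comp_of_comp_eq_const (psiMap12_comp_fiberIncl n hn) rfl rfl
  have hqs := inducedHom_leftInverse (normalizeConfig_comp_fiberIncl n hn)
    (x := fiberBasePt n hn) rfl hbase
  exact ⟨hqs.injective, range_eq_ker_of_injective_prod hpq hps hqs,
    map_commutator_eq_of_injective_prod fundamentalGroup_configSpace_two_mul_comm hpq hps hqs⟩

end
end
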